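/- Let L be a fixed even integer with L ≥ 6, let S be a nonempty finite index set, let (W_k, k ∈ S) be independent identically distributed random variables each with law λ_unps3, and let Z be a standard normal N(0,1) random variable. Then E(Σ_{k∈S} W_k)^L ≤ (card S)^{L/2} · E Z^L. -/

import Mathlib

open MeasureTheory ProbabilityTheory Filter Topology
open scoped ENNReal NNReal

noncomputable section

/-- `λ_unps3`: the uniform distribution on the interval `[-√3, √3]`. -/
def lambdaUnps3 : Measure ℝ :=
  (ENNReal.ofReal (2 * Real.sqrt 3))⁻¹ •
    (volume.restrict (Set.Icc (-(Real.sqrt 3)) (Real.sqrt 3)))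

/-- A family of real random variables is `m`-tuplewise independent if every subfamily
indexed by a set of cardinality between 2 and `m` is independent. -/
def TuplewiseIndep {Ω ι : Type*} [MeasurableSpace Ω] (P : Measure Ω) (m : ℕ)
    (X : ι → Ω → ℝ) : Prop :=
  ∀ S : Finset ι, 2 ≤ S.card → S.card ≤ m →
    iIndepFun
      (fun i : {i // i ∈ S} => X i) P

/-- The map `φ_n : ℝ^n → ℝ^n`. -/
def phi (n : ℕ) (x : Fin n → ℝ) : Fin n → ℝ :=
  if 0 < ∑ i, x i then x else if (∑ i, x i) = 0 then 0 else -x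

/-- Splicing `L` blocks of length `n` into one vector of length `L * n`:
block `ℓ` occupies coordinates `ℓ*n, …, ℓ*n + n - 1`. -/
def splice {L n : ℕ} (x : Fin L → Fin n → ℝ) : Fin (L * n) → ℝ :=
  fun k => x (finProdFinEquiv.symm k).1 (finProdFinEquiv.symm k).2

/-- The map `ψ_{n,j} : ℝ^{Ln} → ℝ^{Ln}`: if the product of the block sums is positive,
multiply block `j` by `-1`; otherwise do nothing. -/
def psi (L n : ℕ) (j : Fin L) (y : Fin (L * n) → ℝ) : Fin (L * n) → ℝ :=
  if 0 < ∏ ℓ : Fin L, ∑ i : Fin n, y (finProdFinEquiv (ℓ, i)) then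
    fun k => if (finProdFinEquiv.symm k).1 = j then -y k else y k
  else y

/-- The set `Υ = {x ∈ {-1,1}^L : ∏ i, x i = -1}`. -/
def Upsilon (L : ℕ) : Set (Fin L → ℝ) :=
  {x | (∀ i, x i = 1 ∨ x i = -1) ∧ ∏ i, x i = -1}

/-- `ν`: the uniform distribution on `Υ`, i.e. `ν({x}) = 2^{-(L-1)}` for `x ∈ Υ`. -/
def nuL (L : ℕ) : Measure (Fin L → ℝ) :=
  ((2 : ℝ≥0∞) ^ (L - 1))⁻¹ • (Measure.count.restrict (Upsilon L))

/-- `θ(μ)`: the law on `ℝ^{Ln}` of `⟨V_0 φ_n(W^(0)) | ⋯ | V_{L-1} φ_n(W^(L-1))⟩`,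
where `W^(0), …, W^(L-1)` are i.i.d. with law `μ` and `V ~ ν` is independent of them. -/
def theta (L n : ℕ) (μ : Measure (Fin n → ℝ)) : Measure (Fin (L * n) → ℝ) :=
  Measure.map
    (fun p : (Fin L → ℝ) × (Fin L → (Fin n → ℝ)) =>
      splice (fun ℓ => p.1 ℓ • phi n (p.2 ℓ)))
    ((nuL L).prod (Measure.pi fun _ : Fin L => μ))

/-- Condition `H(n)` for a probability measure `μ` on `ℝ^n` (with parameter `L`). -/
structure CondH (L n : ℕ) (μ : Measure (Fin n → ℝ)) : Prop where
  abs_cont : μ ≪ volume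
  marginal : ∀ k : Fin n, Measure.map (fun x => x k) μ = lambdaUnps3
  tuplewise : TuplewiseIndep μ (L - 1) (fun k (x : Fin n → ℝ) => x k)
  abs_indep : 2 ≤ n → iIndepFun
      (fun k (x : Fin n → ℝ) => |x k|) μ
  neg_inv : Measure.map (fun x => -x) μ = μ
  perm : ∀ j : Fin n, ∃ σ : Equiv.Perm (Fin n),
      σ ⟨0, j.pos⟩ = j ∧ Measure.map (fun x => x ∘ σ) μ = μ
  prod_nonpos : L ≤ n → ∀ S : Finset (Fin n), S.card = L →
      (∫ x, ∏ i ∈ S, x i ∂μ) ≤ 0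

/-- The recursively defined measures `μ_n` on `ℝ^{L^n}`:
`μ_0 = λ_unps3` and `μ_{n+1} = θ(μ_n)`. -/
def muSeq (L : ℕ) : (n : ℕ) → Measure (Fin (L ^ n) → ℝ)
  | 0 => Measure.map (fun x : ℝ => fun _ : Fin (L ^ 0) => x) lambdaUnps3
  | n + 1 =>
    Measure.map
      (fun (x : Fin (L * L ^ n) → ℝ) (k : Fin (L ^ (n + 1))) =>
        x (Fin.cast (show L ^ (n + 1) = L * L ^ n by rw [pow_succ, Nat.mul_comm]) k))
      (theta L (L ^ n) (muSeq L n))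

/-- `W = (W_k, k ∈ ℤ)` has law `D(n, μ)`: the successive length-`n` blocks
`(W_{nu}, …, W_{nu+n-1})`, `u ∈ ℤ`, are independent and each has law `μ`. -/
def HasLawD {Ω : Type*} [MeasurableSpace Ω] (P : Measure Ω) (n : ℕ)
    (μ : Measure (Fin n → ℝ)) (W : ℤ → Ω → ℝ) : Prop :=
  iIndepFun
      (fun (u : ℤ) (ω : Ω) => fun i : Fin n => W ((n : ℤ) * u + (i : ℤ)) ω) P ∧
    ∀ u : ℤ, Measure.map (fun ω => fun i : Fin n => W ((n : ℤ) * u + (i : ℤ)) ω) P = μ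

/-- Strict stationarity of a sequence of real random variables indexed by `ℤ`. -/
def StrictlyStationary {Ω : Type*} [MeasurableSpace Ω] (P : Measure Ω)
    (X : ℤ → Ω → ℝ) : Prop :=
  ∀ (j ℓ : ℤ) (m : ℕ),
    Measure.map (fun ω => fun i : Fin (m + 1) => X (j + (i : ℤ)) ω) P =
    Measure.map (fun ω => fun i : Fin (m + 1) => X (ℓ + (i : ℤ)) ω) P

/-- `J(n) = Σ_{u=1}^n L^{u-1} κ_u` (here `κ u` stands for the paper's `κ_{u+1}`). -/
def Jfun (L : ℕ) {Ω : Type*} (κ : ℕ → Ω → Fin L) (n : ℕ) (ω : Ω) : ℕ :=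
  ∑ u ∈ Finset.range n, L ^ u * (κ u ω : ℕ)

end

noncomputable section AuxStmt18
open Real Set Finset
open scoped Nat



lemma sqrt3_pos : (0:ℝ) < Real.sqrt 3 := Real.sqrt_pos.mpr (by norm_num)

instance : IsProbabilityMeasure lambdaUnps3 := by
  constructor
  rw [lambdaUnps3, Measure.smul_apply, Measure.restrict_apply MeasurableSet.univ,
    Set.univ_inter, Real.volume_Icc]
  rw [show Real.sqrt 3 - -Real.sqrt 3 = 2 * Real.sqrt 3 by ring]
  rw [smul_eq_mul, ENNReal.inv_mul_cancel]
  · simp only [ne_eq, ENNReal.ofReal_eq_zero, not_le]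
    positivity
  · exact ENNReal.ofReal_ne_top

/-- moments of lambdaUnps3 -/
lemma lambda_moment (m : ℕ) :
    ∫ x, x ^ m ∂lambdaUnps3
      = (2 * Real.sqrt 3)⁻¹ * ((Real.sqrt 3 ^ (m+1) - (-Real.sqrt 3) ^ (m+1)) / (m+1)) := by
  rw [lambdaUnps3, integral_smul_measure]
  rw [ENNReal.toReal_inv, ENNReal.toReal_ofReal (by positivity : (0:ℝ) ≤ 2 * Real.sqrt 3)]
  rw [smul_eq_mul]
  congr 1
  have : (∫ x in Set.Icc (-(Real.sqrt 3)) (Real.sqrt 3), x ^ m)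
      = ∫ x in (-(Real.sqrt 3))..(Real.sqrt 3), x ^ m := by
    rw [intervalIntegral.integral_of_le (by linarith [sqrt3_pos]), integral_Icc_eq_integral_Ioc]
  rw [this, integral_pow]


lemma lambda_moment_even (q : ℕ) :
    ∫ x, x ^ (2*q) ∂lambdaUnps3 = 3 ^ q / (2*q+1) := by
  rw [lambda_moment]
  have h1 : (-Real.sqrt 3) ^ (2*q+1) = -(Real.sqrt 3 ^ (2*q+1)) := by
    rw [Odd.neg_pow ⟨q, by ring⟩]
  rw [h1]
  have h2 : Real.sqrt 3 ^ (2*q+1) = Real.sqrt 3 * 3 ^ q := by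
    rw [pow_succ, pow_mul, Real.sq_sqrt (by norm_num : (0:ℝ) ≤ 3)]
    ring
  rw [h2]
  have h3 : Real.sqrt 3 ≠ 0 := ne_of_gt sqrt3_pos
  field_simp
  push_cast
  ring

lemma lambda_moment_odd (q : ℕ) :
    ∫ x, x ^ (2*q+1) ∂lambdaUnps3 = 0 := by
  rw [lambda_moment]
  have h1 : (-Real.sqrt 3) ^ (2*q+1+1) = Real.sqrt 3 ^ (2*q+1+1) := by
    rw [Even.neg_pow ⟨q+1, by ring⟩]
  rw [h1]
  simp

lemma lambda_ae_Icc : ∀ᵐ x ∂lambdaUnps3, x ∈ Set.Icc (-(Real.sqrt 3)) (Real.sqrt 3) := by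
  rw [ae_iff, lambdaUnps3, Measure.smul_apply]
  have : {a : ℝ | a ∉ Set.Icc (-(Real.sqrt 3)) (Real.sqrt 3)}
      = (Set.Icc (-(Real.sqrt 3)) (Real.sqrt 3))ᶜ := rfl
  rw [this, Measure.restrict_apply (measurableSet_Icc.compl), Set.compl_inter_self,
    measure_empty, smul_zero]


lemma intGm (m : ℕ) : Integrable (fun x : ℝ => x ^ m * Real.exp (-(1/2) * x ^ 2)) := by
  have := integrable_rpow_mul_exp_neg_mul_sq (b := 1/2) (by norm_num) (s := (m : ℝ))
    (lt_of_lt_of_le neg_one_lt_zero (Nat.cast_nonneg m))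
  convert this using 2 with x
  rw [Real.rpow_natCast]

lemma tendstoGm_top (k : ℕ) :
    Tendsto (fun x : ℝ => x ^ k * Real.exp (-(1/2) * x ^ 2)) atTop (𝓝 0) := by
  have h := rpow_mul_exp_neg_mul_sq_isLittleO_exp_neg (b := 1/2) (by norm_num) (k : ℝ)
  have h2 : Tendsto (fun x : ℝ => Real.exp (-(1/2) * x)) atTop (𝓝 0) := by
    apply Real.tendsto_exp_atBot.comp
    exact Tendsto.const_mul_atTop_of_neg (by norm_num) tendsto_id
  have h3 := h.trans_tendsto h2
  convert h3 using 2 with x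
  rw [Real.rpow_natCast]

lemma tendstoGm_bot (k : ℕ) :
    Tendsto (fun x : ℝ => x ^ k * Real.exp (-(1/2) * x ^ 2)) atBot (𝓝 0) := by
  have h := (tendstoGm_top k).comp tendsto_neg_atBot_atTop
  have heq : (fun x : ℝ => (-x) ^ k * Real.exp (-(1/2) * (-x) ^ 2))
      = fun x : ℝ => (-1 : ℝ) ^ k * (x ^ k * Real.exp (-(1/2) * x ^ 2)) := by
    funext x; ring_nf
  have h' : Tendsto (fun x : ℝ => (-1:ℝ) ^ k * (x ^ k * Real.exp (-(1/2) * x ^ 2)))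
      atBot (𝓝 0) := by
    rw [← heq]; exact h
  have := h'.const_mul ((-1:ℝ) ^ k)
  simpa [← mul_assoc, ← mul_pow] using this

/-- the raw Gaussian integrals -/
def Gm (m : ℕ) : ℝ := ∫ x : ℝ, x ^ m * Real.exp (-(1/2) * x ^ 2)

lemma Gm_zero : Gm 0 = Real.sqrt (2 * π) := by
  rw [Gm]
  simpa [div_div_eq_mul_div, mul_comm] using integral_gaussian (1/2)

lemma Gm_rec (m : ℕ) : Gm (m + 2) = (m + 1) * Gm m := by
  set f : ℝ → ℝ := fun x => -(x ^ (m+1) * Real.exp (-(1/2) * x ^ 2)) with hf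
  have hderiv : ∀ x : ℝ, HasDerivAt f
      (x ^ (m+2) * Real.exp (-(1/2) * x ^ 2)
        - (m+1) * (x ^ m * Real.exp (-(1/2) * x ^ 2))) x := by
    intro x
    have h1 : HasDerivAt (fun x : ℝ => x ^ (m+1)) ((m+1) * x ^ m) x := by
      simpa using hasDerivAt_pow (m+1) x
    have h2 : HasDerivAt (fun x : ℝ => Real.exp (-(1/2) * x ^ 2))
        (Real.exp (-(1/2) * x ^ 2) * (-(1/2) * (2*x))) x := by
      apply HasDerivAt.exp
      have : HasDerivAt (fun x : ℝ => x ^ 2) (2 * x) x := by simpa using hasDerivAt_pow 2 x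
      simpa using this.const_mul (-(1/2 : ℝ))
    have := (h1.mul h2).neg
    exact this.congr_deriv (by ring)
  have hint : Integrable (fun x : ℝ => x ^ (m+2) * Real.exp (-(1/2) * x ^ 2)
      - (m+1) * (x ^ m * Real.exp (-(1/2) * x ^ 2))) :=
    (intGm (m+2)).sub ((intGm m).const_mul _)
  have htop : Tendsto f atTop (𝓝 0) := by
    have := (tendstoGm_top (m+1)).neg
    rw [neg_zero] at this; exact this
  have hbot : Tendsto f atBot (𝓝 0) := by
    have := (tendstoGm_bot (m+1)).neg
    rw [neg_zero] at this; exact this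
  have hIic := integral_Iic_of_hasDerivAt_of_tendsto (a := (0:ℝ))
    (hderiv 0).continuousAt.continuousWithinAt (fun x _ => hderiv x)
    hint.integrableOn hbot
  have hIoi := integral_Ioi_of_hasDerivAt_of_tendsto (a := (0:ℝ))
    (hderiv 0).continuousAt.continuousWithinAt (fun x _ => hderiv x)
    hint.integrableOn htop
  have hsplit := intervalIntegral.integral_Iic_add_Ioi (b := (0:ℝ)) hint.integrableOn hint.integrableOn
  have hf0 : f 0 = 0 := by simp [hf]
  have hzero : (∫ x : ℝ, (x ^ (m+2) * Real.exp (-(1/2) * x ^ 2)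
      - (m+1) * (x ^ m * Real.exp (-(1/2) * x ^ 2)))) = 0 := by
    rw [← hsplit, hIic, hIoi, hf0]; ring
  rw [integral_sub (intGm (m+2)) ((intGm m).const_mul _), integral_const_mul] at hzero
  rw [Gm, Gm]
  linarith [hzero]

lemma sqrt_two_pi_pos : (0:ℝ) < Real.sqrt (2 * π) :=
  Real.sqrt_pos.mpr (by positivity)

/-- Gaussian moments -/
lemma gauss_moment (m : ℕ) :
    ∫ x, x ^ m ∂(gaussianReal 0 1) = (Real.sqrt (2 * π))⁻¹ * Gm m := by
  rw [gaussianReal_of_var_ne_zero 0 one_ne_zero]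
  have hpdf : (gaussianPDF 0 1) = fun x => ((Real.toNNReal (gaussianPDFReal 0 1 x) : ℝ≥0) : ℝ≥0∞) := by
    funext x; rw [gaussianPDF]; rfl
  rw [hpdf]
  rw [integral_withDensity_eq_integral_smul
    ((measurable_gaussianPDFReal 0 1).real_toNNReal) (fun x => x ^ m)]
  have : ∀ x : ℝ, (Real.toNNReal (gaussianPDFReal 0 1 x)) • x ^ m
      = (Real.sqrt (2 * π))⁻¹ * (x ^ m * Real.exp (-(1/2) * x ^ 2)) := by
    intro x
    rw [NNReal.smul_def, smul_eq_mul, Real.coe_toNNReal _ (gaussianPDFReal_nonneg 0 1 x)]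
    rw [gaussianPDFReal]
    push_cast
    rw [mul_one, sub_zero]
    ring_nf
  simp_rw [this]
  rw [integral_const_mul]
  rw [Gm]

lemma gauss_moment_even (q : ℕ) :
    ∫ x, x ^ (2 * q) ∂(gaussianReal 0 1) = ((2 * q - 1)‼ : ℝ) := by
  induction q with
  | zero =>
    rw [Nat.mul_zero, gauss_moment, Gm_zero, inv_mul_cancel₀ (ne_of_gt sqrt_two_pi_pos)]
    norm_num
  | succ q ih =>
    have h2 : 2 * (q + 1) = 2 * q + 2 := by ring
    rw [h2, gauss_moment, Gm_rec]
    have hstep : (Real.sqrt (2*π))⁻¹ * (((2*q : ℕ) : ℝ) + 1) * Gm (2*q)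
        = (((2*q : ℕ) : ℝ)+1) * ((Real.sqrt (2*π))⁻¹ * Gm (2*q)) := by ring
    rw [← mul_assoc, hstep, ← gauss_moment, ih]
    rw [show 2 * q + 2 - 1 = 2 * q + 1 by omega]
    rw [Nat.doubleFactorial_add_one]
    push_cast
    ring



def dd (k : ℕ) : ℝ := ((k - 1)‼ : ℝ)

lemma dd_nonneg (k : ℕ) : 0 ≤ dd k := Nat.cast_nonneg _

lemma key_df (k : ℕ) : 2 ^ k * k ! * (2 * k - 1)‼ = (2 * k)! := by
  cases k with
  | zero => rfl
  | succ m =>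
    have h1 : 2 * (m + 1) = (2 * m + 1) + 1 := by ring
    rw [h1, Nat.factorial_eq_mul_doubleFactorial (2 * m + 1)]
    rw [show 2 * m + 1 + 1 = 2 * (m + 1) by ring, Nat.doubleFactorial_two_mul]
    rw [show 2 * (m + 1) - 1 = 2 * m + 1 by omega]

lemma c2 (p q : ℕ) (h : q ≤ p) :
    (2 * p).choose (2 * q) * (2 * q - 1)‼ * (2 * (p - q) - 1)‼ = p.choose q * (2 * p - 1)‼ := by
  have hpos : 0 < 2 ^ p * q ! * (p - q)! := by positivity
  apply Nat.eq_of_mul_eq_mul_right hpos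
  have e1 : (2:ℕ) ^ p = 2 ^ q * 2 ^ (p - q) := by rw [← pow_add]; congr 1; omega
  have hL : (2 * p).choose (2 * q) * (2 * q - 1)‼ * (2 * (p - q) - 1)‼ *
      (2 ^ p * q ! * (p - q)!) = (2 * p)! := by
    have : (2 * p).choose (2 * q) * (2 * q - 1)‼ * (2 * (p - q) - 1)‼ *
        (2 ^ q * 2 ^ (p - q) * q ! * (p - q)!)
        = (2 * p).choose (2 * q) * (2 ^ q * q ! * (2 * q - 1)‼) *
          (2 ^ (p - q) * (p - q)! * (2 * (p - q) - 1)‼) := by ring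
    rw [e1, this, key_df, key_df, show 2 * (p - q) = 2 * p - 2 * q by omega]
    exact Nat.choose_mul_factorial_mul_factorial (by omega)
  have hR : p.choose q * (2 * p - 1)‼ * (2 ^ p * q ! * (p - q)!) = (2 * p)! := by
    have : p.choose q * (2 * p - 1)‼ * (2 ^ p * q ! * (p - q)!)
        = (p.choose q * q ! * (p - q)!) * (2 ^ p * (2 * p - 1)‼) := by ring
    rw [this, Nat.choose_mul_factorial_mul_factorial h]
    rw [show p ! * (2 ^ p * (2 * p - 1)‼) = 2 ^ p * p ! * (2 * p - 1)‼ by ring, key_df]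
  rw [hL, hR]

lemma c3 (p n : ℕ) :
    ∑ i ∈ Finset.range (2 * p + 1),
      (if Even i then ((2 * p).choose i : ℝ) * (n : ℝ) ^ (i / 2) * dd i * dd (2 * p - i) else 0)
    = ((n : ℝ) + 1) ^ p * dd (2 * p) := by
  rw [← Finset.sum_filter]
  have h2 : (Finset.range (2 * p + 1)).filter (fun i => Even i)
      = (Finset.range (p + 1)).image (fun q => 2 * q) := by
    ext i
    simp only [Finset.mem_filter, Finset.mem_range, Finset.mem_image]
    constructor
    · rintro ⟨h1, q, hq⟩
      exact ⟨q, by omega, by omega⟩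
    · rintro ⟨q, hq, rfl⟩
      exact ⟨by omega, q, by omega⟩
  rw [h2, Finset.sum_image (by intro a _ b _ hab; simp only at hab; omega)]
  have h3 : ∀ q ∈ Finset.range (p + 1),
      ((2 * p).choose (2 * q) : ℝ) * (n : ℝ) ^ ((2 * q) / 2) * dd (2 * q) * dd (2 * p - 2 * q)
      = (p.choose q : ℝ) * ((2 * p - 1)‼ : ℝ) * (n : ℝ) ^ q := by
    intro q hq
    rw [Finset.mem_range] at hq
    have hqp : q ≤ p := by omega
    have : dd (2 * q) = ((2 * q - 1)‼ : ℝ) := rfl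
    rw [this, show dd (2 * p - 2 * q) = ((2 * (p - q) - 1)‼ : ℝ) by
        rw [dd, show 2 * p - 2 * q - 1 = 2 * (p - q) - 1 by omega]]
    rw [show (2 * q) / 2 = q by omega]
    have := c2 p q hqp
    have hcast : ((2 * p).choose (2 * q) : ℝ) * ((2 * q - 1)‼ : ℝ) * ((2 * (p - q) - 1)‼ : ℝ)
        = (p.choose q : ℝ) * ((2 * p - 1)‼ : ℝ) := by
      exact_mod_cast congrArg (Nat.cast : ℕ → ℝ) this
    calc ((2 * p).choose (2 * q) : ℝ) * (n : ℝ) ^ q * ((2 * q - 1)‼ : ℝ) * ((2 * (p-q) - 1)‼ : ℝ)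
        = (((2 * p).choose (2 * q) : ℝ) * ((2 * q - 1)‼:ℝ) * ((2 * (p-q) - 1)‼:ℝ)) * (n:ℝ) ^ q := by ring
      _ = (p.choose q : ℝ) * ((2 * p - 1)‼ : ℝ) * (n : ℝ) ^ q := by rw [hcast]
  rw [Finset.sum_congr rfl h3]
  have h4 : ((n : ℝ) + 1) ^ p = ∑ q ∈ Finset.range (p + 1), (n : ℝ) ^ q * 1 ^ (p - q) * (p.choose q) := by
    exact add_pow (n : ℝ) 1 p
  rw [h4, Finset.sum_mul]
  apply Finset.sum_congr rfl
  intro q hq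
  rw [dd, show 2 * p - 1 = 2 * p - 1 from rfl]
  ring

lemma c1 (q : ℕ) : (3:ℝ) ^ q / (2 * q + 1) ≤ dd (2 * q) := by
  have h : (3:ℕ) ^ q ≤ (2 * q + 1)‼ := by
    induction q with
    | zero => simp
    | succ m ih =>
      rw [show 2 * (m + 1) + 1 = (2 * m + 1) + 2 by ring, Nat.doubleFactorial_add_two, pow_succ]
      calc 3 ^ m * 3 ≤ (2 * m + 1)‼ * 3 := by exact Nat.mul_le_mul_right 3 ih
        _ ≤ (2 * m + 1 + 2) * (2 * m + 1)‼ := by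
            rw [mul_comm]; exact Nat.mul_le_mul_right _ (by omega)
  have h2 : (2 * q + 1)‼ = (2 * q + 1) * (2 * q - 1)‼ := Nat.doubleFactorial_add_one (2 * q)
  rw [div_le_iff₀ (by positivity)]
  rw [dd]
  calc (3:ℝ) ^ q ≤ ((2 * q + 1)‼ : ℝ) := by exact_mod_cast h
    _ = ((2 * q - 1)‼ : ℝ) * (2 * (q:ℝ) + 1) := by rw [h2]; push_cast; ring

def Mv (m : ℕ) : ℝ := ∫ x, x ^ m ∂lambdaUnps3

lemma Mv_nonneg (m : ℕ) : 0 ≤ Mv m := by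
  rcases Nat.even_or_odd m with ⟨q, hq⟩ | ⟨q, hq⟩
  · rw [Mv, show m = 2 * q by omega, lambda_moment_even]; positivity
  · rw [Mv, show m = 2 * q + 1 by omega, lambda_moment_odd]

lemma Mv_le_dd {m : ℕ} (hm : Even m) : Mv m ≤ dd m := by
  obtain ⟨q, hq⟩ := hm
  rw [Mv, show m = 2 * q by omega, lambda_moment_even]
  exact c1 q

lemma Mv_odd {m : ℕ} (hm : Odd m) : Mv m = 0 := by
  obtain ⟨q, hq⟩ := hm
  rw [Mv, hq, lambda_moment_odd]

section MainInd

variable {Ω : Type*} [MeasurableSpace Ω] {P : Measure Ω} [IsProbabilityMeasure P]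
variable {ι : Type*} [Fintype ι]

lemma stmt18_main_ind (W : ι → Ω → ℝ) (hWmeas : ∀ k, Measurable (W k))
    (hWindep : iIndepFun W P)
    (hWlaw : ∀ k, Measure.map (W k) P = lambdaUnps3) (T : Finset ι) :
    ∀ j : ℕ, Even j →
      ∫ ω, (∑ k ∈ T, W k ω) ^ j ∂P ≤ (T.card : ℝ) ^ (j / 2) * dd j := by
  classical
  have hae : ∀ k, ∀ᵐ ω ∂P, W k ω ∈ Set.Icc (-(Real.sqrt 3)) (Real.sqrt 3) := by
    intro k
    have h := lambda_ae_Icc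
    rw [← hWlaw k] at h
    exact (ae_map_iff (hWmeas k).aemeasurable measurableSet_Icc).mp h
  have haeAll : ∀ᵐ ω ∂P, ∀ k : ι, W k ω ∈ Set.Icc (-(Real.sqrt 3)) (Real.sqrt 3) :=
    ae_all_iff.mpr hae
  have hSmeas : ∀ T' : Finset ι, Measurable (fun ω => ∑ k ∈ T', W k ω) :=
    fun T' => Finset.measurable_sum T' (fun k _ => hWmeas k)
  induction T using Finset.induction_on with
  | empty =>
    intro j hj
    obtain ⟨p, hp⟩ := hj
    simp only [Finset.sum_empty, Finset.card_empty, Nat.cast_zero]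
    rcases Nat.eq_zero_or_pos j with rfl | hjpos
    · simp [dd]
    · rw [zero_pow (by omega : j ≠ 0), integral_zero]
      have : ((0:ℝ)) ^ (j / 2) = 0 := zero_pow (by omega)
      rw [this, zero_mul]
  | @insert a T ha IH =>
    intro j hj
    set S : Ω → ℝ := fun ω => ∑ k ∈ T, W k ω with hS
    set n : ℕ := T.card with hn
    obtain ⟨p, hp⟩ := hj
    have hj2 : j = 2 * p := by omega
    have hterm_int : ∀ i m : ℕ, Integrable (fun ω => S ω ^ i * W a ω ^ m) P := by
      intro i m
      apply Integrable.mono' (integrable_const (((n : ℝ) * Real.sqrt 3) ^ i * Real.sqrt 3 ^ m))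
      · exact (((hSmeas T).pow_const i).mul ((hWmeas a).pow_const m)).aestronglyMeasurable
      · filter_upwards [haeAll] with ω hω
        have habs : ∀ k : ι, |W k ω| ≤ Real.sqrt 3 := by
          intro k
          exact abs_le.mpr ⟨(hω k).1, (hω k).2⟩
        have hSabs : |S ω| ≤ (n : ℝ) * Real.sqrt 3 := by
          calc |S ω| ≤ ∑ k ∈ T, |W k ω| := Finset.abs_sum_le_sum_abs _ _
            _ ≤ ∑ _k ∈ T, Real.sqrt 3 := Finset.sum_le_sum (fun k _ => habs k)
            _ = (n : ℝ) * Real.sqrt 3 := by rw [Finset.sum_const, hn, nsmul_eq_mul]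
        rw [norm_mul, norm_pow, norm_pow]
        apply mul_le_mul _ _ (by positivity) (by positivity)
        · exact pow_le_pow_left₀ (norm_nonneg _) hSabs i
        · exact pow_le_pow_left₀ (norm_nonneg _) (habs a) m
    have hindep : ∀ i m : ℕ,
        IndepFun (fun ω => S ω ^ i) (fun ω => W a ω ^ m) P := by
      intro i m
      have h0 := hWindep.indepFun_finsetSum_of_notMem hWmeas ha
      have hSeq : (∑ k ∈ T, W k) = S := by
        funext ω
        simp [hS, Finset.sum_apply]
      rw [hSeq] at h0
      exact h0.comp (measurable_id.pow_const i) (measurable_id.pow_const m)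
    have hmul : ∀ i m : ℕ,
        ∫ ω, S ω ^ i * W a ω ^ m ∂P = (∫ ω, S ω ^ i ∂P) * ∫ ω, W a ω ^ m ∂P := by
      intro i m
      have h := (hindep i m).integral_mul_eq_mul_integral
        (((hSmeas T).pow_const i).aestronglyMeasurable)
        (((hWmeas a).pow_const m).aestronglyMeasurable)
      simpa [Pi.mul_apply] using h
    have hWa_mom : ∀ m : ℕ, ∫ ω, W a ω ^ m ∂P = Mv m := by
      intro m
      rw [Mv, ← hWlaw a, integral_map (hWmeas a).aemeasurable
        ((measurable_id'.pow_const m).aestronglyMeasurable)]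
    have hexp : ∫ ω, (∑ k ∈ insert a T, W k ω) ^ j ∂P
        = ∑ i ∈ Finset.range (j + 1),
            (∫ ω, S ω ^ i ∂P) * Mv (j - i) * (j.choose i : ℝ) := by
      have h1 : ∀ ω, (∑ k ∈ insert a T, W k ω) ^ j
          = ∑ i ∈ Finset.range (j + 1), S ω ^ i * W a ω ^ (j - i) * (j.choose i : ℝ) := by
        intro ω
        rw [Finset.sum_insert ha, add_comm, add_pow]
      simp_rw [h1]
      rw [integral_finset_sum _ (fun i _ => (hterm_int i (j - i)).mul_const _)]
      apply Finset.sum_congr rfl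
      intro i _
      rw [integral_mul_const, hmul, hWa_mom]
    rw [hexp]
    have hbound : ∑ i ∈ Finset.range (j + 1),
          (∫ ω, S ω ^ i ∂P) * Mv (j - i) * (j.choose i : ℝ)
        ≤ ∑ i ∈ Finset.range (j + 1),
            (if Even i then ((2 * p).choose i : ℝ) * (n : ℝ) ^ (i / 2) * dd i * dd (2 * p - i)
             else 0) := by
      apply Finset.sum_le_sum
      intro i hi
      rw [Finset.mem_range] at hi
      have hij : i ≤ j := by omega
      by_cases hEi : Even i
      · rw [if_pos hEi]
        have hEji : Even (j - i) := by
          rw [Nat.even_iff]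
          rw [Nat.even_iff] at hEi
          omega
        have hIH : ∫ ω, S ω ^ i ∂P ≤ (n : ℝ) ^ (i / 2) * dd i := IH i hEi
        have h1 : (∫ ω, S ω ^ i ∂P) * Mv (j - i)
            ≤ ((n : ℝ) ^ (i / 2) * dd i) * dd (j - i) := by
          calc (∫ ω, S ω ^ i ∂P) * Mv (j - i)
              ≤ ((n : ℝ) ^ (i / 2) * dd i) * Mv (j - i) :=
                mul_le_mul_of_nonneg_right hIH (Mv_nonneg _)
            _ ≤ ((n : ℝ) ^ (i / 2) * dd i) * dd (j - i) :=
                mul_le_mul_of_nonneg_left (Mv_le_dd hEji)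
                  (mul_nonneg (by positivity) (dd_nonneg _))
        calc (∫ ω, S ω ^ i ∂P) * Mv (j - i) * (j.choose i : ℝ)
            ≤ ((n : ℝ) ^ (i / 2) * dd i * dd (j - i)) * (j.choose i : ℝ) :=
              mul_le_mul_of_nonneg_right h1 (Nat.cast_nonneg _)
          _ = ((2 * p).choose i : ℝ) * (n : ℝ) ^ (i / 2) * dd i * dd (2 * p - i) := by
              rw [← hj2]; ring
      · rw [if_neg hEi]
        have hOji : Odd (j - i) := Nat.Even.sub_odd hij ⟨p, hp⟩ (Nat.not_even_iff_odd.mp hEi)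
        rw [Mv_odd hOji, mul_zero, zero_mul]
    refine hbound.trans ?_
    rw [hj2, c3 p n]
    have hcard : (insert a T).card = n + 1 := Finset.card_insert_of_notMem ha
    rw [hcard]
    have hcast : ((n + 1 : ℕ) : ℝ) = (n : ℝ) + 1 := by push_cast; ring
    rw [hcast, show (2 * p) / 2 = p by omega]

end MainInd

end AuxStmt18

/-- Inequality (3.3): for i.i.d. `λ_unps3` random variables `(W_k, k ∈ S)`,
`E(Σ_k W_k)^L ≤ (card S)^{L/2} · E Z^L` with `Z` standard normal. -/
theorem stmt18 (L : ℕ) (hLeven : Even L) (hL6 : 6 ≤ L)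
    {ι : Type*} [Fintype ι] [Nonempty ι]
    {Ω : Type*} [MeasurableSpace Ω] (P : Measure Ω) [IsProbabilityMeasure P]
    (W : ι → Ω → ℝ) (hWmeas : ∀ k, Measurable (W k))
    (hWindep : iIndepFun W P)
    (hWlaw : ∀ k, Measure.map (W k) P = lambdaUnps3) :
    (∫ ω, (∑ k, W k ω) ^ L ∂P)
      ≤ (Fintype.card ι : ℝ) ^ ((L : ℝ) / 2) * ∫ x, x ^ L ∂(gaussianReal 0 1) := by
  have hLe := hLeven
  obtain ⟨p, hp⟩ := hLeven
  have hL2 : L = 2 * p := by omega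
  have hmain := stmt18_main_ind W hWmeas hWindep hWlaw Finset.univ L hLe
  rw [Finset.card_univ] at hmain
  have hg : ∫ x, x ^ L ∂(gaussianReal 0 1) = dd L := by
    rw [hL2, gauss_moment_even]
    rfl
  rw [hg]
  have hrw : (Fintype.card ι : ℝ) ^ ((L : ℝ) / 2)
      = (Fintype.card ι : ℝ) ^ (L / 2 : ℕ) := by
    rw [show ((L : ℝ) / 2) = ((L / 2 : ℕ) : ℝ) by
      rw [hL2]; push_cast; rw [show 2 * p / 2 = p by omega]; push_cast; ring]
    rw [Real.rpow_natCast]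
  rw [hrw]
  exact hmain
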